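/- Let H be a finite weakly nilpotent hypergroup and M a maximal closed subset of H. Then M is strongly normal in H. -/

import Mathlib

/-!
Write `h^T` for the class `ThT`. For a closed subset `T`, the two conditions defining
`h^T ∈ Z(H//T)` say that `h^T y^T = y^T h^T` for all `y` and `(h*)^T h^T = T`, as sets.
If `c ∈ ab` and `b^T` is thin, then `c^T = a^T b^T`. So both conditions are stable under
products and under `*`, and every term of the upper central series is closed.

Let `T = Zᵢ(H)` be the last term of the series contained in `M`. Pick `z ∈ Zᵢ₊₁(H) \ M`.
For `m ∈ M`, the conjugate `z* m z` lies in `(z*)^T m^T z^T = (z*)^T z^T m^T = m^T ⊆ M`,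
and in the same way `z m z* ⊆ M`. Hence the closed subset of all `h` with `h* M h ⊆ M` and
`h M h* ⊆ M` contains `M ∪ {z}`, and by maximality it is all of `H`.
-/

/-- A hypergroup: a set with a hypermultiplication, identity and involution
satisfying (H1), (H2), (H3). -/
structure Hypergroup (H : Type*) where
  hmul : H → H → Set H
  one : H
  star : H → H
  assoc : ∀ p q r : H, (⋃ x ∈ hmul q r, hmul p x) = ⋃ x ∈ hmul p q, hmul x r
  hmul_one : ∀ s : H, hmul s one = {s}
  inv_left : ∀ p q r : H, r ∈ hmul p q → q ∈ hmul (star p) r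
  inv_right : ∀ p q r : H, r ∈ hmul p q → p ∈ hmul r (star q)

namespace Hypergroup

variable {H : Type*} (G : Hypergroup H)

/-- Complex (set) product: `AB = ⋃_{a ∈ A, b ∈ B} ab`. -/
def smul (A B : Set H) : Set H := ⋃ a ∈ A, ⋃ b ∈ B, G.hmul a b

/-- `A* = { a* | a ∈ A }`. -/
def sstar (A : Set H) : Set H := G.star '' A

/-- A nonempty subset `F` is closed if `F*F ⊆ F`. -/
def IsClosed (F : Set H) : Prop := F.Nonempty ∧ G.smul (G.sstar F) F ⊆ F

/-- `F` is normal in `K`: `Fk ⊆ kF` for all `k ∈ K`. -/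
def IsNormalIn (F K : Set H) : Prop := ∀ k ∈ K, G.smul F {k} ⊆ G.smul {k} F

/-- `F` is strongly normal in `K`: `k*Fk ⊆ F` for all `k ∈ K`. -/
def IsStronglyNormalIn (F K : Set H) : Prop :=
  ∀ k ∈ K, G.smul (G.smul {G.star k} F) {k} ⊆ F

/-- An element `s` is thin if `s*s = {1}`. -/
def IsThinElem (s : H) : Prop := G.hmul (G.star s) s = {G.one}

/-- A hypergroup is thin if all elements are thin. -/
def IsThin : Prop := ∀ s : H, G.IsThinElem s

/-- The center `Z(H) = {h | hx = xh for all x, h*h = {1}}`. -/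
def center : Set H :=
  {h | (∀ x : H, G.hmul h x = G.hmul x h) ∧ G.hmul (G.star h) h = {G.one}}

/-- The class `h^F := FhF`. -/
def cls (F : Set H) (h : H) : Set H := G.smul (G.smul F {h}) F

/-- The quotient set `H//F := { h^F | h ∈ H }`. -/
def quotSet (F : Set H) : Set (Set H) := Set.range (G.cls F)

/-- The class `h^F` as an element of `H//F`. -/
def qcls (F : Set H) (h : H) : G.quotSet F := ⟨G.cls F h, h, rfl⟩

/-- The full preimage in `H` of the center of the quotient `H//T`:
`{h | h^T ∈ Z(H//T)}`, i.e. `h^T` commutes with all classes `y^T` and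
`(h^T)*(h^T) = {1^T} = {T}`. -/
def qCenterPre (T : Set H) : Set H :=
  {h | (∀ y : H, G.cls T '' (G.smul (G.smul {h} T) {y}) =
          G.cls T '' (G.smul (G.smul {y} T) {h})) ∧
       G.cls T '' (G.smul (G.smul {G.star h} T) {h}) = {T}}

/-- The upper central series: `Z₀(H) = {1}`, and `Zᵢ₊₁(H)` is the full preimage
of `Z(H//Zᵢ(H))`, i.e. `Zᵢ₊₁(H)//Zᵢ(H) = Z(H//Zᵢ(H))`. -/
def upperCentral : ℕ → Set H
  | 0 => {G.one}
  | n + 1 => G.qCenterPre (upperCentral n)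

/-- A hypergroup is weakly nilpotent if `Zₙ(H) = H` for some `n`. -/
def WeaklyNilpotent : Prop := ∃ n : ℕ, G.upperCentral n = Set.univ

/-- `F` is subnormal in `K` via a chain of successively normal closed subsets. -/
def IsSubnormalIn (F K : Set H) : Prop :=
  ∃ n : ℕ, ∃ C : ℕ → Set H, C 0 = F ∧ C n = K ∧
    ∀ i < n, C i ⊆ C (i + 1) ∧ G.IsClosed (C (i + 1)) ∧ G.IsNormalIn (C i) (C (i + 1))

/-- The quotient `K//N` is thin: `(k^N)*(k^N) = {1^N}` for all `k ∈ K`. -/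
def QuotThin (N K : Set H) : Prop :=
  ∀ k ∈ K, G.cls N '' (G.smul (G.smul {G.star k} N) {k}) = {N}

/-- A residually-thin chain from `{1}` to `K`. -/
def RTChainOn (K : Set H) (n : ℕ) (C : ℕ → Set H) : Prop :=
  C 0 = {G.one} ∧ C n = K ∧
    ∀ i < n, C i ⊆ C (i + 1) ∧ G.IsClosed (C (i + 1)) ∧ G.QuotThin (C i) (C (i + 1))

/-- The valency `n_K = ∏ |Cᵢ₊₁//Cᵢ|` computed along some RT chain for `K`. -/
def HasValencyOn (K : Set H) (m : ℕ) : Prop :=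
  ∃ n C, G.RTChainOn K n C ∧
    m = ∏ i ∈ Finset.range n, Nat.card (G.cls (C i) '' C (i + 1))

/-- A closed `p`-subset: a closed subset whose valency is a power of `p`. -/
def PSubsetOn (p : ℕ) (K : Set H) : Prop :=
  G.IsClosed K ∧ ∃ m k : ℕ, G.HasValencyOn K m ∧ m = p ^ k

/-- `h` is `p`-valenced in `K`: for every subnormal closed `p`-subset `U` of `K`
such that `(h*)^U h^U` consists of thin elements of the quotient,
`n_{(h*)^U h^U} = |(h*)^U h^U|` is a power of `p`. -/
def PValencedElemOn (p : ℕ) (K : Set H) (h : H) : Prop :=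
  ∀ U : Set H, G.IsClosed U → U ⊆ K → G.IsSubnormalIn U K → G.PSubsetOn p U →
    (∀ x ∈ G.smul (G.smul {G.star h} U) {h},
      G.cls U '' (G.smul (G.smul {G.star x} U) {x}) = {U}) →
    ∃ k : ℕ, Nat.card (G.cls U '' (G.smul (G.smul {G.star h} U) {h})) = p ^ k

/-- `K` is `p`-valenced if all its elements are. -/
def PValencedOn (p : ℕ) (K : Set H) : Prop := ∀ h ∈ K, G.PValencedElemOn p K h

end Hypergroup

namespace Hypergroup

variable {H : Type*} (G : Hypergroup H)

local infixl:70 " ⋆ " => G.smul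

theorem mem_smul {A B : Set H} {x : H} : x ∈ A ⋆ B ↔ ∃ a ∈ A, ∃ b ∈ B, x ∈ G.hmul a b := by
  simp [smul]

@[gcongr]
theorem smul_mono {A A' B B' : Set H} (hA : A ⊆ A') (hB : B ⊆ B') : A ⋆ B ⊆ A' ⋆ B' := by
  intro x hx
  obtain ⟨a, ha, b, hb, hx⟩ := G.mem_smul.1 hx
  exact G.mem_smul.2 ⟨a, hA ha, b, hB hb, hx⟩

theorem smul_assoc (A B C : Set H) : A ⋆ B ⋆ C = A ⋆ (B ⋆ C) := by
  ext w
  simp only [G.mem_smul]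
  constructor
  · rintro ⟨u, ⟨a, ha, b, hb, hu⟩, c, hc, hw⟩
    have hw' : w ∈ ⋃ x ∈ G.hmul a b, G.hmul x c := Set.mem_biUnion hu hw
    rw [← G.assoc] at hw'
    obtain ⟨x, hx, hw'⟩ := Set.mem_iUnion₂.1 hw'
    exact ⟨a, ha, x, ⟨b, hb, c, hc, hx⟩, hw'⟩
  · rintro ⟨a, ha, x, ⟨b, hb, c, hc, hx⟩, hw⟩
    have hw' : w ∈ ⋃ v ∈ G.hmul b c, G.hmul a v := Set.mem_biUnion hx hw
    rw [G.assoc] at hw'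
    obtain ⟨u, hu, hw'⟩ := Set.mem_iUnion₂.1 hw'
    exact ⟨u, ⟨a, ha, b, hb, hu⟩, c, hc, hw'⟩

theorem mem_smul_singleton {A : Set H} {b x : H} : x ∈ A ⋆ {b} ↔ ∃ a ∈ A, x ∈ G.hmul a b := by
  simp [smul]

theorem mem_singleton_smul {B : Set H} {a x : H} : x ∈ {a} ⋆ B ↔ ∃ b ∈ B, x ∈ G.hmul a b := by
  simp [smul]

theorem singleton_smul_singleton (a b : H) : {a} ⋆ {b} = G.hmul a b := by
  simp [smul]

theorem smul_singleton_one (A : Set H) : A ⋆ {G.one} = A := by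
  simp [smul, G.hmul_one]

theorem mem_hmul_one (s : H) : s ∈ G.hmul s G.one := by
  rw [G.hmul_one]; rfl

theorem one_mem_star_hmul (s : H) : G.one ∈ G.hmul (G.star s) s :=
  G.inv_left _ _ _ (G.mem_hmul_one s)

theorem star_star (s : H) : G.star (G.star s) = s := by
  simpa [G.hmul_one, eq_comm] using G.inv_left _ _ _ (G.one_mem_star_hmul s)

theorem mem_one_hmul (s : H) : s ∈ G.hmul G.one s := by
  simpa only [G.star_star] using G.inv_right _ _ _ (G.one_mem_star_hmul (G.star s))

theorem star_one : G.star G.one = G.one := by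
  simpa [G.hmul_one, eq_comm] using G.inv_left _ _ _ (G.mem_hmul_one G.one)

theorem star_mem_hmul_star {p q c : H} (h : c ∈ G.hmul p q) :
    G.star c ∈ G.hmul (G.star q) (G.star p) :=
  G.inv_right _ _ _ (G.inv_left _ _ _ (G.inv_right _ _ _ h))

theorem sstar_smul (A B : Set H) : G.sstar (A ⋆ B) = G.sstar B ⋆ G.sstar A := by
  ext x
  simp only [sstar, Set.mem_image, G.mem_smul]
  constructor
  · rintro ⟨c, ⟨a, ha, b, hb, hc⟩, rfl⟩
    exact ⟨G.star b, ⟨b, hb, rfl⟩, G.star a, ⟨a, ha, rfl⟩, G.star_mem_hmul_star hc⟩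
  · rintro ⟨_, ⟨b, hb, rfl⟩, _, ⟨a, ha, rfl⟩, hx⟩
    refine ⟨G.star x, ⟨a, ha, b, hb, ?_⟩, G.star_star x⟩
    simpa only [G.star_star] using G.star_mem_hmul_star hx

theorem sstar_singleton (a : H) : G.sstar {a} = {G.star a} := by
  simp [sstar]

theorem subset_smul_right {A T : Set H} (h1 : G.one ∈ T) : A ⊆ A ⋆ T :=
  fun a ha => G.mem_smul.2 ⟨a, ha, G.one, h1, G.mem_hmul_one a⟩

theorem subset_smul_left {A T : Set H} (h1 : G.one ∈ T) : A ⊆ T ⋆ A :=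
  fun a ha => G.mem_smul.2 ⟨G.one, h1, a, ha, G.mem_one_hmul a⟩

theorem mem_cls_self {T : Set H} (h1 : G.one ∈ T) (h : H) : h ∈ G.cls T h :=
  G.subset_smul_right h1 (G.subset_smul_left h1 rfl)

theorem mem_smul_smul_iff {T A : Set H} {w : H} :
    w ∈ T ⋆ A ⋆ T ↔ ∃ a ∈ A, w ∈ G.cls T a := by
  simp only [cls, G.mem_smul, Set.mem_singleton_iff]
  constructor
  · rintro ⟨u, ⟨t, ht, a, ha, hu⟩, t', ht', hw⟩
    exact ⟨a, ha, u, ⟨t, ht, a, rfl, hu⟩, t', ht', hw⟩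
  · rintro ⟨a, ha, u, ⟨t, ht, _, rfl, hu⟩, t', ht', hw⟩
    exact ⟨u, ⟨t, ht, _, ha, hu⟩, t', ht', hw⟩

theorem isClosed_of_mem {S : Set H} (hne : S.Nonempty) (hstar : ∀ h ∈ S, G.star h ∈ S)
    (hmul : ∀ a ∈ S, ∀ b ∈ S, G.hmul a b ⊆ S) : G.IsClosed S := by
  refine ⟨hne, fun _ hx => ?_⟩
  obtain ⟨_, ⟨a, ha, rfl⟩, b, hb, hx⟩ := G.mem_smul.1 hx
  exact hmul _ (hstar a ha) b hb hx

section Closed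

variable {G} {T M : Set H}

theorem IsClosed.one_mem (hT : G.IsClosed T) : G.one ∈ T := by
  obtain ⟨t, ht⟩ := hT.1
  exact hT.2 (G.mem_smul.2 ⟨G.star t, ⟨t, ht, rfl⟩, t, ht, G.one_mem_star_hmul t⟩)

theorem IsClosed.star_mem (hT : G.IsClosed T) {t : H} (ht : t ∈ T) : G.star t ∈ T :=
  hT.2 (G.mem_smul.2 ⟨G.star t, ⟨t, ht, rfl⟩, G.one, hT.one_mem, G.mem_hmul_one _⟩)

theorem IsClosed.hmul_subset (hT : G.IsClosed T) {a b : H} (ha : a ∈ T) (hb : b ∈ T) :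
    G.hmul a b ⊆ T := fun _ hx =>
  hT.2 (G.mem_smul.2 ⟨a, ⟨G.star a, hT.star_mem ha, G.star_star a⟩, b, hb, hx⟩)

theorem IsClosed.smul_subset (hT : G.IsClosed T) {A B : Set H} (hA : A ⊆ T) (hB : B ⊆ T) :
    A ⋆ B ⊆ T := fun x hx => by
  obtain ⟨a, ha, b, hb, hx⟩ := G.mem_smul.1 hx
  exact hT.hmul_subset (hA ha) (hB hb) hx

theorem IsClosed.smul_self (hT : G.IsClosed T) : T ⋆ T = T :=
  (hT.smul_subset le_rfl le_rfl).antisymm (G.subset_smul_right hT.one_mem)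

theorem IsClosed.smul_smul_self (hT : G.IsClosed T) (A : Set H) : T ⋆ (T ⋆ A) = T ⋆ A := by
  rw [← G.smul_assoc, hT.smul_self]

theorem IsClosed.sstar_eq (hT : G.IsClosed T) : G.sstar T = T := by
  refine Set.Subset.antisymm ?_ fun t ht => ⟨G.star t, hT.star_mem ht, G.star_star t⟩
  rintro _ ⟨t, ht, rfl⟩
  exact hT.star_mem ht

theorem IsClosed.cls_subset_of_mem (hM : G.IsClosed M) (hTM : T ⊆ M) {m : H} (hm : m ∈ M) :
    G.cls T m ⊆ M :=
  hM.smul_subset (hM.smul_subset hTM (Set.singleton_subset_iff.2 hm)) hTM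

theorem IsClosed.cls_one (hT : G.IsClosed T) : G.cls T G.one = T := by
  rw [cls, G.smul_singleton_one, hT.smul_self]

theorem IsClosed.smul_cls (hT : G.IsClosed T) (h : H) : T ⋆ G.cls T h = G.cls T h := by
  simp only [cls, G.smul_assoc, hT.smul_smul_self]

theorem IsClosed.cls_smul (hT : G.IsClosed T) (h : H) : G.cls T h ⋆ T = G.cls T h := by
  rw [cls, G.smul_assoc _ T T, hT.smul_self]

theorem IsClosed.cls_smul_cls (hT : G.IsClosed T) (a b : H) :
    G.cls T a ⋆ G.cls T b = T ⋆ ({a} ⋆ T ⋆ {b}) ⋆ T := by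
  simp only [cls, G.smul_assoc, hT.smul_smul_self]

theorem IsClosed.sstar_cls (hT : G.IsClosed T) (h : H) :
    G.sstar (G.cls T h) = G.cls T (G.star h) := by
  simp only [cls, G.sstar_smul, G.sstar_singleton, hT.sstar_eq, G.smul_assoc]

theorem IsClosed.cls_subset_cls_of_mem (hT : G.IsClosed T) {u v : H} (hv : v ∈ G.cls T u) :
    G.cls T v ⊆ G.cls T u := by
  calc G.cls T v ⊆ T ⋆ G.cls T u ⋆ T := by unfold cls; gcongr; exact Set.singleton_subset_iff.2 hv
    _ = G.cls T u := by rw [hT.smul_cls, hT.cls_smul]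

theorem IsClosed.mem_cls_comm (hT : G.IsClosed T) {u v : H} (hv : v ∈ G.cls T u) :
    u ∈ G.cls T v := by
  obtain ⟨p, hp, t', ht', hvp⟩ := G.mem_smul.1 hv
  obtain ⟨t, ht, u', hu', hup⟩ := G.mem_smul.1 hp
  rw [Set.mem_singleton_iff.1 hu'] at hup
  have hu : u ∈ {G.star t} ⋆ ({v} ⋆ {G.star t'}) := by
    rw [G.singleton_smul_singleton]
    exact G.mem_smul.2 ⟨_, rfl, p, G.inv_right _ _ _ hvp, G.inv_left _ _ _ hup⟩
  rw [← G.smul_assoc] at hu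
  exact G.smul_mono (G.smul_mono (Set.singleton_subset_iff.2 (hT.star_mem ht)) le_rfl)
    (Set.singleton_subset_iff.2 (hT.star_mem ht')) hu

theorem IsClosed.cls_eq_of_mem (hT : G.IsClosed T) {u v : H} (hv : v ∈ G.cls T u) :
    G.cls T v = G.cls T u :=
  (hT.cls_subset_cls_of_mem hv).antisymm (hT.cls_subset_cls_of_mem (hT.mem_cls_comm hv))

theorem IsClosed.image_cls_eq_iff (hT : G.IsClosed T) {A B : Set H} :
    G.cls T '' A = G.cls T '' B ↔ T ⋆ A ⋆ T = T ⋆ B ⋆ T := by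
  have key : ∀ {A B : Set H}, G.cls T '' A ⊆ G.cls T '' B ↔ T ⋆ A ⋆ T ⊆ T ⋆ B ⋆ T := by
    intro A B
    constructor
    · intro h w hw
      obtain ⟨a, ha, hw⟩ := G.mem_smul_smul_iff.1 hw
      obtain ⟨b, hb, hab⟩ := h ⟨a, ha, rfl⟩
      exact G.mem_smul_smul_iff.2 ⟨b, hb, hab ▸ hw⟩
    · rintro h _ ⟨a, ha, rfl⟩
      obtain ⟨b, hb, hab⟩ :=
        G.mem_smul_smul_iff.1 (h (G.mem_smul_smul_iff.2 ⟨a, ha, G.mem_cls_self hT.one_mem a⟩))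
      exact ⟨b, hb, (hT.cls_eq_of_mem hab).symm⟩
  simp only [Set.Subset.antisymm_iff, key]

end Closed

section QuotientCenter

variable {G} {T : Set H}

theorem IsClosed.mem_qCenterPre_iff (hT : G.IsClosed T) {h : H} :
    h ∈ G.qCenterPre T ↔
      (∀ y, G.cls T h ⋆ G.cls T y = G.cls T y ⋆ G.cls T h) ∧
        G.cls T (G.star h) ⋆ G.cls T h = T := by
  have hT1 : ({T} : Set (Set H)) = G.cls T '' {G.one} := by
    rw [Set.image_singleton, hT.cls_one]
  simp only [qCenterPre, Set.mem_ofPred_eq, hT1, hT.image_cls_eq_iff, hT.cls_smul_cls,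
    G.smul_singleton_one, hT.smul_self]

theorem IsClosed.one_mem_qCenterPre (hT : G.IsClosed T) : G.one ∈ G.qCenterPre T := by
  rw [hT.mem_qCenterPre_iff, G.star_one, hT.cls_one]
  exact ⟨fun y => by rw [hT.smul_cls, hT.cls_smul], hT.smul_self⟩

theorem IsClosed.star_mem_qCenterPre (hT : G.IsClosed T) {h : H} (hh : h ∈ G.qCenterPre T) :
    G.star h ∈ G.qCenterPre T := by
  obtain ⟨hcomm, hthin⟩ := hT.mem_qCenterPre_iff.1 hh
  have hcomm' : ∀ y, G.cls T (G.star h) ⋆ G.cls T y = G.cls T y ⋆ G.cls T (G.star h) := by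
    intro y
    simpa only [G.sstar_smul, hT.sstar_cls, G.star_star] using
      (congrArg G.sstar (hcomm (G.star y))).symm
  exact hT.mem_qCenterPre_iff.2 ⟨hcomm', by rw [G.star_star, ← hcomm', hthin]⟩

theorem IsClosed.cls_eq_cls_smul_cls_of_mem_hmul (hT : G.IsClosed T) {a b c : H}
    (hb : G.cls T (G.star b) ⋆ G.cls T b = T) (hc : c ∈ G.hmul a b) :
    G.cls T c = G.cls T a ⋆ G.cls T b := by
  have h1 := hT.one_mem
  have hconj : {G.star b} ⋆ T ⋆ {b} ⊆ T := by
    calc {G.star b} ⋆ T ⋆ {b} ⊆ G.cls T (G.star b) ⋆ T ⋆ G.cls T b := by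
          gcongr <;> exact Set.singleton_subset_iff.2 (G.mem_cls_self h1 _)
      _ = T := by rw [hT.cls_smul, hb]
  rw [hT.cls_smul_cls]
  refine Set.Subset.antisymm ?_ ?_
  · calc G.cls T c ⊆ T ⋆ ({a} ⋆ {b}) ⋆ T := by
          unfold cls; gcongr
          rw [G.singleton_smul_singleton]; exact Set.singleton_subset_iff.2 hc
      _ ⊆ T ⋆ ({a} ⋆ T ⋆ {b}) ⋆ T := by gcongr; exact G.subset_smul_right h1
  · calc T ⋆ ({a} ⋆ T ⋆ {b}) ⋆ T ⊆ T ⋆ ({c} ⋆ {G.star b} ⋆ T ⋆ {b}) ⋆ T := by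
          gcongr
          rw [G.singleton_smul_singleton]
          exact Set.singleton_subset_iff.2 (G.inv_right _ _ _ hc)
      _ = T ⋆ {c} ⋆ ({G.star b} ⋆ T ⋆ {b}) ⋆ T := by simp only [G.smul_assoc]
      _ ⊆ T ⋆ {c} ⋆ T ⋆ T := by gcongr
      _ = G.cls T c := by rw [G.smul_assoc _ T T, hT.smul_self]; rfl

theorem IsClosed.hmul_subset_qCenterPre (hT : G.IsClosed T) {a b : H}
    (ha : a ∈ G.qCenterPre T) (hb : b ∈ G.qCenterPre T) : G.hmul a b ⊆ G.qCenterPre T := by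
  intro c hc
  have hcls := hT.cls_eq_cls_smul_cls_of_mem_hmul (hT.mem_qCenterPre_iff.1 hb).2 hc
  have hcls' := hT.cls_eq_cls_smul_cls_of_mem_hmul
    (hT.mem_qCenterPre_iff.1 (hT.star_mem_qCenterPre ha)).2 (G.star_mem_hmul_star hc)
  rw [hT.mem_qCenterPre_iff] at ha hb ⊢
  refine ⟨fun y => ?_, ?_⟩
  · rw [hcls, G.smul_assoc, hb.1 y, ← G.smul_assoc, ha.1 y, G.smul_assoc]
  · rw [hcls, hcls', G.smul_assoc, ← G.smul_assoc _ (G.cls T a), ha.2, hT.smul_cls, hb.2]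

theorem IsClosed.isClosed_qCenterPre (hT : G.IsClosed T) : G.IsClosed (G.qCenterPre T) :=
  G.isClosed_of_mem ⟨G.one, hT.one_mem_qCenterPre⟩ (fun _ => hT.star_mem_qCenterPre)
    fun _ ha _ hb => hT.hmul_subset_qCenterPre ha hb

end QuotientCenter

theorem isClosed_upperCentral : ∀ n, G.IsClosed (G.upperCentral n)
  | 0 => G.isClosed_of_mem (Set.singleton_nonempty _)
      (fun h (hh : h = G.one) => by rw [hh, G.star_one]; rfl)
      fun a (ha : a = G.one) b (hb : b = G.one) => by rw [ha, hb, G.hmul_one]; rfl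
  | n + 1 => (isClosed_upperCentral n).isClosed_qCenterPre

def strongNormalizer (M : Set H) : Set H :=
  {h | {G.star h} ⋆ M ⋆ {h} ⊆ M ∧ {h} ⋆ M ⋆ {G.star h} ⊆ M}

theorem conj_subset_of_mem_hmul {a b c : H} (hc : c ∈ G.hmul a b) (A : Set H) :
    {G.star c} ⋆ A ⋆ {c} ⊆ {G.star b} ⋆ ({G.star a} ⋆ A ⋆ {a}) ⋆ {b} := by
  have hc' : ({c} : Set H) ⊆ {a} ⋆ {b} := by
    rw [G.singleton_smul_singleton]; exact Set.singleton_subset_iff.2 hc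
  have hcs : ({G.star c} : Set H) ⊆ {G.star b} ⋆ {G.star a} := by
    rw [G.singleton_smul_singleton]; exact Set.singleton_subset_iff.2 (G.star_mem_hmul_star hc)
  calc {G.star c} ⋆ A ⋆ {c} ⊆ {G.star b} ⋆ {G.star a} ⋆ A ⋆ ({a} ⋆ {b}) := by gcongr
    _ = {G.star b} ⋆ ({G.star a} ⋆ A ⋆ {a}) ⋆ {b} := by simp only [G.smul_assoc]

section StrongNormalizer

variable {G} {T M : Set H}

theorem IsClosed.subset_strongNormalizer (hM : G.IsClosed M) : M ⊆ G.strongNormalizer M :=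
  fun _ hm =>
    have hm' := Set.singleton_subset_iff.2 hm
    have hms := Set.singleton_subset_iff.2 (hM.star_mem hm)
    ⟨hM.smul_subset (hM.smul_subset hms le_rfl) hm', hM.smul_subset (hM.smul_subset hm' le_rfl) hms⟩

theorem IsClosed.isClosed_strongNormalizer (hM : G.IsClosed M) :
    G.IsClosed (G.strongNormalizer M) := by
  refine G.isClosed_of_mem ⟨G.one, hM.subset_strongNormalizer hM.one_mem⟩
    (fun h hh => ?_) fun a ha b hb c hc => ⟨?_, ?_⟩
  · simpa only [strongNormalizer, Set.mem_ofPred_eq, G.star_star] using hh.symm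
  · calc {G.star c} ⋆ M ⋆ {c} ⊆ {G.star b} ⋆ ({G.star a} ⋆ M ⋆ {a}) ⋆ {b} :=
          G.conj_subset_of_mem_hmul hc M
      _ ⊆ {G.star b} ⋆ M ⋆ {b} := by gcongr; exact ha.1
      _ ⊆ M := hb.1
  · calc {c} ⋆ M ⋆ {G.star c} ⊆ {a} ⋆ ({b} ⋆ M ⋆ {G.star b}) ⋆ {G.star a} := by
          simpa only [G.star_star] using G.conj_subset_of_mem_hmul (G.star_mem_hmul_star hc) M
      _ ⊆ {a} ⋆ M ⋆ {G.star a} := by gcongr; exact hb.2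
      _ ⊆ M := ha.2

theorem IsClosed.conj_subset_of_mem_qCenterPre (hT : G.IsClosed T) (hM : G.IsClosed M)
    (hTM : T ⊆ M) {z : H} (hz : z ∈ G.qCenterPre T) : {G.star z} ⋆ M ⋆ {z} ⊆ M := by
  obtain ⟨hcomm, hthin⟩ := hT.mem_qCenterPre_iff.1 hz
  have hsingle : ∀ x, ({x} : Set H) ⊆ G.cls T x :=
    fun x => Set.singleton_subset_iff.2 (G.mem_cls_self hT.one_mem x)
  intro w hw
  obtain ⟨u, hu, hw⟩ := G.mem_smul_singleton.1 hw
  obtain ⟨m, hm, hu⟩ := G.mem_singleton_smul.1 hu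
  have hw' : w ∈ G.cls T (G.star z) ⋆ G.cls T m ⋆ G.cls T z := by
    refine G.smul_mono (G.smul_mono (hsingle _) (hsingle m)) (hsingle z) ?_
    exact G.mem_smul_singleton.2 ⟨u, G.mem_singleton_smul.2 ⟨m, rfl, hu⟩, hw⟩
  rw [G.smul_assoc, ← hcomm m, ← G.smul_assoc, hthin, hT.smul_cls] at hw'
  exact hM.cls_subset_of_mem hTM hm hw'

theorem IsClosed.mem_strongNormalizer_of_mem_qCenterPre (hT : G.IsClosed T)
    (hM : G.IsClosed M) (hTM : T ⊆ M) {z : H} (hz : z ∈ G.qCenterPre T) :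
    z ∈ G.strongNormalizer M :=
  ⟨hT.conj_subset_of_mem_qCenterPre hM hTM hz, by
    simpa only [G.star_star] using
      hT.conj_subset_of_mem_qCenterPre hM hTM (hT.star_mem_qCenterPre hz)⟩

end StrongNormalizer

end Hypergroup

theorem maximal_stronglyNormal_general {H : Type*} (G : Hypergroup H)
    (hG : G.WeaklyNilpotent) (M : Set H) (hM : G.IsClosed M)
    (hMne : M ≠ Set.univ)
    (hmax : ∀ K : Set H, G.IsClosed K → M ⊆ K → K ≠ Set.univ → M = K) :
    G.IsStronglyNormalIn M Set.univ := by
  obtain ⟨n, hn⟩ := hG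
  obtain ⟨i, hiM, hi⟩ : ∃ i, G.upperCentral i ⊆ M ∧ ¬ G.upperCentral (i + 1) ⊆ M := by
    by_contra! hsucc
    have hall : ∀ k, G.upperCentral k ⊆ M := fun k => by
      induction k with
      | zero => exact Set.singleton_subset_iff.2 hM.one_mem
      | succ k ih => exact hsucc k ih
    exact hMne (Set.eq_univ_of_univ_subset (hn ▸ hall n))
  obtain ⟨z, hz, hzM⟩ := Set.not_subset.1 hi
  have hzN := (G.isClosed_upperCentral i).mem_strongNormalizer_of_mem_qCenterPre hM hiM hz
  have hN : G.strongNormalizer M = Set.univ := by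
    by_contra hN
    exact hzM (hmax _ hM.isClosed_strongNormalizer hM.subset_strongNormalizer hN ▸ hzN)
  exact fun k _ => (hN ▸ Set.mem_univ k : k ∈ G.strongNormalizer M).1

/-- in a finite weakly nilpotent hypergroup, every maximal
closed subset is strongly normal. -/
theorem maximal_stronglyNormal {H : Type*} [Finite H] (G : Hypergroup H)
    (hG : G.WeaklyNilpotent) (M : Set H) (hM : G.IsClosed M)
    (hMne : M ≠ Set.univ)
    (hmax : ∀ K : Set H, G.IsClosed K → M ⊆ K → K ≠ Set.univ → M = K) :
    G.IsStronglyNormalIn M Set.univ :=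
  maximal_stronglyNormal_general G hG M hM hMne hmax
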